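/- Let S = K[x_1,x_2] and I = (x_1^2, x_1x_2). Then sdepth(I) = 1 while sdepth(√I) = 2; in particular the inequality sdepth(I) ≤ sdepth(√I) can be strict. -/

import Mathlib

/-!
The Stanley space `x^d K[Z]` is spanned by the monomials `x^c` with `c` in the cone `d + ℕ^Z`, and
a monomial ideal is spanned by the monomials whose exponents lie in the upper closure of its
generators' exponents; so Stanley decompositions are partitions of that upper set into cones.
For `I = (x₁², x₁x₂)` the cones `(2,0) + ℕ·e₁` and `(1,1) + ℕ²` give `sdepth I ≥ 1`. In a
decomposition into spaces `u K[x₁,x₂] = (u)` any two summands share `u_i u_j ≠ 0`, so there is just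
one and `I` would be principal, which it is not. The radical `√I = (x₁)` is principal, of sdepth 2.
-/

open MvPolynomial

variable {K : Type*} [Field K]

/-- The Stanley space `u·K[Z]`: the `K`-linear span of all `u * v` where `v` is a
monomial in the variables of `Z`. -/
noncomputable def stanleySpace {n : ℕ} (u : MvPolynomial (Fin n) K) (Z : Finset (Fin n)) :
    Submodule K (MvPolynomial (Fin n) K) :=
  Submodule.span K { w | ∃ d : Fin n →₀ ℕ, ↑d.support ⊆ (Z : Set (Fin n)) ∧
    w = u * MvPolynomial.monomial d 1 }

/-- `u` is a monomial. -/
def IsMonomial {n : ℕ} (u : MvPolynomial (Fin n) K) : Prop :=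
  ∃ d : Fin n →₀ ℕ, u = MvPolynomial.monomial d 1

/-- A monomial ideal: an ideal generated by monomials. -/
def IsMonomialIdeal {n : ℕ} (I : Ideal (MvPolynomial (Fin n) K)) : Prop :=
  ∃ G : Set (MvPolynomial (Fin n) K), (∀ u ∈ G, IsMonomial u) ∧ I = Ideal.span G

/-- `(u i, Z i)` is a Stanley decomposition of the ideal `I`:
`I = ⊕ᵢ uᵢ K[Zᵢ]` as `K`-vector spaces, with each `uᵢ` a monomial. -/
def IsStanleyDecomp {n : ℕ} (I : Ideal (MvPolynomial (Fin n) K)) {s : ℕ}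
    (u : Fin s → MvPolynomial (Fin n) K) (Z : Fin s → Finset (Fin n)) : Prop :=
  (∀ i, IsMonomial (u i)) ∧
  iSupIndep (fun i => stanleySpace (u i) (Z i)) ∧
  (⨆ i, stanleySpace (u i) (Z i)) = Submodule.restrictScalars K I

/-- The Stanley depth of a monomial ideal: the largest `k` such that there is a
Stanley decomposition all of whose Stanley spaces have dimension at least `k`. -/
noncomputable def sdepth {n : ℕ} (I : Ideal (MvPolynomial (Fin n) K)) : ℕ :=
  sSup { k | ∃ (s : ℕ) (u : Fin s → MvPolynomial (Fin n) K) (Z : Fin s → Finset (Fin n)),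
    IsStanleyDecomp I u Z ∧ ∀ i, k ≤ (Z i).card }

section MonomialSupport

variable {σ R : Type*} [CommSemiring R]

lemma iSup_restrictSupport {ι : Sort*} (S : ι → Set (σ →₀ ℕ)) :
    ⨆ i, restrictSupport R (S i) = restrictSupport R (⋃ i, S i) := by
  simp only [restrictSupport_eq_span, Set.image_iUnion, Submodule.span_iUnion]

lemma disjoint_restrictSupport {S T : Set (σ →₀ ℕ)} (h : Disjoint S T) :
    Disjoint (restrictSupport R S) (restrictSupport R T) := by
  rw [Submodule.disjoint_def]
  intro p hS hT
  rw [mem_restrictSupport_iff] at hS hT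
  exact support_eq_empty.1 (Finset.coe_eq_empty.1 (Set.subset_empty_iff.1 (h hS hT)))

lemma iSupIndep_restrictSupport {ι : Type*} {S : ι → Set (σ →₀ ℕ)}
    (h : Pairwise fun i j => Disjoint (S i) (S j)) :
    iSupIndep fun i => restrictSupport R (S i) := by
  intro i
  simp only [iSup_restrictSupport]
  exact disjoint_restrictSupport (Set.disjoint_iUnion_right.2 fun j =>
    Set.disjoint_iUnion_right.2 fun hj => h (Ne.symm hj))

lemma restrictScalars_span_monomial_image (S : Set (σ →₀ ℕ)) :
    (Ideal.span ((fun s => monomial s (1 : R)) '' S)).restrictScalars R =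
      restrictSupport R (upperClosure S) := by
  ext p
  simp [mem_restrictSupport_iff, mem_ideal_span_monomial_image, Set.subset_def]

lemma monomial_mem_span_monomial_image_iff [Nontrivial R] {S : Set (σ →₀ ℕ)} {c : σ →₀ ℕ} :
    monomial c (1 : R) ∈ Ideal.span ((fun s => monomial s (1 : R)) '' S) ↔ c ∈ upperClosure S := by
  rw [← Submodule.restrictScalars_mem R, restrictScalars_span_monomial_image]
  simp

end MonomialSupport

def stanleyCone {n : ℕ} (d : Fin n →₀ ℕ) (Z : Finset (Fin n)) : Set (Fin n →₀ ℕ) :=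
  {c | d ≤ c ∧ ∀ i ∉ Z, c i = d i}

lemma stanleySpace_monomial {n : ℕ} (d : Fin n →₀ ℕ) (Z : Finset (Fin n)) :
    stanleySpace (monomial d (1 : K)) Z = restrictSupport K (stanleyCone d Z) := by
  rw [restrictSupport_eq_span, stanleySpace]
  congr 1
  ext w
  simp only [monomial_mul, one_mul, Set.mem_image, stanleyCone]
  constructor
  · rintro ⟨e, he, rfl⟩
    refine ⟨d + e, ⟨le_self_add, fun i hi => ?_⟩, rfl⟩
    simpa using Finsupp.notMem_support_iff.1 fun h => hi (he h)
  · rintro ⟨c, ⟨hdc, hZ⟩, rfl⟩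
    refine ⟨c - d, fun i hi => ?_, by rw [add_tsub_cancel_of_le hdc]⟩
    by_contra hiZ
    simp [hZ i hiZ] at hi

lemma stanleySpace_monomial_univ {n : ℕ} (d : Fin n →₀ ℕ) :
    stanleySpace (monomial d (1 : K)) Finset.univ =
      (Ideal.span {monomial d (1 : K)}).restrictScalars K := by
  rw [stanleySpace_monomial, ← Set.image_singleton (f := fun s => monomial s (1 : K)),
    restrictScalars_span_monomial_image]
  congr 1
  ext c
  simp [stanleyCone]

lemma isStanleyDecomp_monomial {n s : ℕ} {I : Ideal (MvPolynomial (Fin n) K)}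
    {S : Set (Fin n →₀ ℕ)} (hI : I.restrictScalars K = restrictSupport K S)
    (d : Fin s → Fin n →₀ ℕ) (Z : Fin s → Finset (Fin n))
    (hdisj : Pairwise fun i j => Disjoint (stanleyCone (d i) (Z i)) (stanleyCone (d j) (Z j)))
    (hcover : ⋃ i, stanleyCone (d i) (Z i) = S) :
    IsStanleyDecomp I (fun i => monomial (d i) 1) Z := by
  simp only [IsStanleyDecomp, stanleySpace_monomial]
  exact ⟨fun i => ⟨d i, rfl⟩, iSupIndep_restrictSupport hdisj,
    by rw [iSup_restrictSupport, hcover, hI]⟩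

lemma IsStanleyDecomp.nonempty {n s : ℕ} {I : Ideal (MvPolynomial (Fin n) K)}
    {u : Fin s → MvPolynomial (Fin n) K} {Z : Fin s → Finset (Fin n)}
    (hd : IsStanleyDecomp I u Z) (hI : I ≠ ⊥) : Nonempty (Fin s) := by
  by_contra hs
  rw [not_nonempty_iff] at hs
  apply hI
  rw [← Submodule.restrictScalars_eq_bot_iff K, ← hd.2.2, iSup_of_empty]

lemma IsStanleyDecomp.exists_eq_span_monomial {n s : ℕ} {I : Ideal (MvPolynomial (Fin n) K)}
    {u : Fin s → MvPolynomial (Fin n) K} {Z : Fin s → Finset (Fin n)}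
    (hd : IsStanleyDecomp I u Z) (hI : I ≠ ⊥) (hZ : ∀ i, Z i = Finset.univ) :
    ∃ d : Fin n →₀ ℕ, I = Ideal.span {monomial d 1} := by
  obtain ⟨i⟩ := hd.nonempty hI
  obtain ⟨hmon, hindep, hsup⟩ := hd
  have hspace : ∀ i, stanleySpace (u i) (Z i) = (Ideal.span {u i}).restrictScalars K := by
    intro i
    obtain ⟨d, hd⟩ := hmon i
    rw [hZ, hd, stanleySpace_monomial_univ]
  have hunique : ∀ j, j = i := by
    intro j
    by_contra hji
    have hne : u j * u i ≠ 0 := by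
      obtain ⟨a, ha⟩ := hmon i
      obtain ⟨b, hb⟩ := hmon j
      simp [ha, hb]
    have hdisj : Disjoint (stanleySpace (u j) (Z j)) (stanleySpace (u i) (Z i)) :=
      hindep.pairwiseDisjoint hji
    rw [hspace, hspace] at hdisj
    exact hne (Submodule.disjoint_def.1 hdisj _
      (Ideal.mul_mem_right _ _ (Ideal.mem_span_singleton_self _))
      (Ideal.mul_mem_left _ _ (Ideal.mem_span_singleton_self _)))
  obtain ⟨d, hd⟩ := hmon i
  refine ⟨d, Submodule.restrictScalars_injective K _ _ ?_⟩
  rw [← hsup, ← hd, ← hspace]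
  exact le_antisymm (iSup_le fun j => hunique j ▸ le_rfl)
    (le_iSup (fun j => stanleySpace (u j) (Z j)) i)

section sdepth

variable {n : ℕ} {I : Ideal (MvPolynomial (Fin n) K)}

lemma le_sdepth {k s : ℕ} {u : Fin s → MvPolynomial (Fin n) K} {Z : Fin s → Finset (Fin n)}
    (hI : I ≠ ⊥) (hd : IsStanleyDecomp I u Z) (hk : ∀ i, k ≤ (Z i).card) : k ≤ sdepth I := by
  refine le_csSup ⟨n, ?_⟩ ⟨s, u, Z, hd, hk⟩
  rintro m ⟨s', u', Z', hd', hm⟩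
  obtain ⟨i⟩ := hd'.nonempty hI
  exact (hm i).trans ((Finset.card_le_univ _).trans_eq (Fintype.card_fin n))

lemma sdepth_le {k : ℕ}
    (h : ∀ (s : ℕ) (u : Fin s → MvPolynomial (Fin n) K) (Z : Fin s → Finset (Fin n)),
      IsStanleyDecomp I u Z → ∃ i, (Z i).card ≤ k) : sdepth I ≤ k := by
  refine csSup_le' ?_
  rintro m ⟨s, u, Z, hd, hm⟩
  obtain ⟨i, hi⟩ := h s u Z hd
  exact (hm i).trans hi

lemma sdepth_span_monomial (d : Fin n →₀ ℕ) : sdepth (Ideal.span {monomial d (1 : K)}) = n := by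
  have hI : Ideal.span {monomial d (1 : K)} ≠ ⊥ := by simp
  have hd : IsStanleyDecomp (Ideal.span {monomial d (1 : K)}) (fun _ : Fin 1 => monomial d 1)
      (fun _ => Finset.univ) :=
    ⟨fun _ => ⟨d, rfl⟩, iSupIndep_subsingleton _, by rw [iSup_const, stanleySpace_monomial_univ]⟩
  refine le_antisymm (sdepth_le fun s u Z hd' => ?_) (le_sdepth hI hd fun _ => by simp)
  obtain ⟨i⟩ := hd'.nonempty hI
  exact ⟨i, (Finset.card_le_univ _).trans_eq (Fintype.card_fin n)⟩

end sdepth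

local notation "𝔞" => Ideal.span {(X 0 : MvPolynomial (Fin 2) K) ^ 2, X 0 * X 1}

lemma X_mul_X_eq_monomial {n : ℕ} (i j : Fin n) :
    (X i * X j : MvPolynomial (Fin n) K) =
      monomial (Finsupp.single i 1 + Finsupp.single j 1) 1 := by
  simp [X, monomial_mul]

lemma span_sq_mul_eq_span_monomial_image : 𝔞 = Ideal.span ((fun s => monomial s (1 : K)) ''
    {Finsupp.single 0 2, Finsupp.single 0 1 + Finsupp.single 1 1}) := by
  rw [Set.image_pair, X_pow_eq_monomial, X_mul_X_eq_monomial]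

lemma span_sq_mul_ne_span_monomial (d : Fin 2 →₀ ℕ) :
    𝔞 ≠ Ideal.span {monomial d (1 : K)} := by
  intro h
  rw [span_sq_mul_eq_span_monomial_image,
    ← Set.image_singleton (f := fun s => monomial s (1 : K))] at h
  have hmem : ∀ c, c ∈ upperClosure ({Finsupp.single 0 2, Finsupp.single 0 1 + Finsupp.single 1 1} :
      Set (Fin 2 →₀ ℕ)) ↔ c ∈ upperClosure {d} := fun c => by
    rw [← monomial_mem_span_monomial_image_iff (R := K), h, monomial_mem_span_monomial_image_iff]
  have h1 := (hmem d).2 (by simp)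
  have h2 := (hmem (Finsupp.single 0 2)).1 (subset_upperClosure (by simp))
  have h3 := (hmem (Finsupp.single 0 1 + Finsupp.single 1 1)).1 (subset_upperClosure (by simp))
  simp [Finsupp.le_def, Fin.forall_fin_two] at h1 h2 h3
  omega

lemma isStanleyDecomp_span_sq_mul :
    IsStanleyDecomp 𝔞 ![(X 0 : MvPolynomial (Fin 2) K) ^ 2, X 0 * X 1] ![{0}, Finset.univ] := by
  have hu : ![(X 0 : MvPolynomial (Fin 2) K) ^ 2, X 0 * X 1] = fun i =>
      monomial (![Finsupp.single 0 2, Finsupp.single 0 1 + Finsupp.single 1 1] i) 1 := by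
    ext1 i
    fin_cases i <;> simp [X_pow_eq_monomial, X_mul_X_eq_monomial]
  have hdisj : Disjoint (stanleyCone (Finsupp.single (0 : Fin 2) 2) {0})
      (stanleyCone (Finsupp.single 0 1 + Finsupp.single 1 1) Finset.univ) := by
    rw [Set.disjoint_left]
    intro c h1 h2
    simp [stanleyCone, Finsupp.le_def, Fin.forall_fin_two] at h1 h2
    omega
  rw [hu]
  refine isStanleyDecomp_monomial
    (by rw [span_sq_mul_eq_span_monomial_image, restrictScalars_span_monomial_image]) _ _
    (fun i j hij => ?_) ?_
  · fin_cases i <;> fin_cases j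
    exacts [absurd rfl hij, hdisj, hdisj.symm, absurd rfl hij]
  · ext c
    simp [stanleyCone, Fin.exists_fin_two, Finsupp.le_def, Fin.forall_fin_two]
    omega

lemma span_sq_mul_ne_bot : 𝔞 ≠ (⊥ : Ideal (MvPolynomial (Fin 2) K)) := by
  rw [Ne, Ideal.span_eq_bot]
  simp

lemma radical_span_sq_mul : (𝔞).radical = Ideal.span {(X 0 : MvPolynomial (Fin 2) K)} := by
  have hprime : (Ideal.span {(X 0 : MvPolynomial (Fin 2) K)}).IsPrime :=
    (Ideal.span_singleton_prime (X_ne_zero 0)).2 X_prime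
  refine le_antisymm ((hprime.radical_le_iff).2 ?_) ?_
  · rw [Ideal.span_le, Set.insert_subset_iff, Set.singleton_subset_iff]
    exact ⟨Ideal.mem_span_singleton.2 (dvd_pow_self _ two_ne_zero),
      Ideal.mem_span_singleton.2 (dvd_mul_right _ _)⟩
  · rw [Ideal.span_le, Set.singleton_subset_iff]
    exact ⟨2, Ideal.subset_span (Set.mem_insert _ _)⟩

lemma sdepth_span_sq_mul_le_one : sdepth 𝔞 ≤ 1 := by
  refine sdepth_le fun s u Z hd => ?_
  by_contra! hZ
  have huniv : ∀ i, Z i = Finset.univ := fun i =>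
    Finset.eq_univ_of_card _
      (le_antisymm ((Finset.card_le_univ _).trans_eq (Fintype.card_fin 2)) (hZ i))
  obtain ⟨d, hd⟩ := hd.exists_eq_span_monomial span_sq_mul_ne_bot huniv
  exact span_sq_mul_ne_span_monomial d hd

/-- For `I = (x_1², x_1x_2) ⊆ K[x_1,x_2]`, `sdepth(I) = 1` while
`sdepth(√I) = 2`; in particular the inequality `sdepth(I) ≤ sdepth(√I)` can be strict. -/
theorem sdepth_example_strict :
    sdepth (Ideal.span {(X 0 : MvPolynomial (Fin 2) K) ^ 2, X 0 * X 1}) = 1 ∧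
    sdepth (Ideal.span {(X 0 : MvPolynomial (Fin 2) K) ^ 2, X 0 * X 1}).radical = 2 ∧
    sdepth (Ideal.span {(X 0 : MvPolynomial (Fin 2) K) ^ 2, X 0 * X 1}) <
      sdepth (Ideal.span {(X 0 : MvPolynomial (Fin 2) K) ^ 2, X 0 * X 1}).radical := by
  have h1 : sdepth 𝔞 = 1 :=
    le_antisymm sdepth_span_sq_mul_le_one
      (le_sdepth span_sq_mul_ne_bot isStanleyDecomp_span_sq_mul fun i => by fin_cases i <;> simp)
  have h2 : sdepth (𝔞).radical = 2 := by
    rw [radical_span_sq_mul, X, sdepth_span_monomial]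
  exact ⟨h1, h2, by rw [h1, h2]; exact one_lt_two⟩
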